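/- arXiv:2603.27875 — 4 statements merged into one kernel-verified Lean document; each statement's English description precedes it below -/
import Mathlib

section
/- Let μ ∈ ℝ, σ > 0, and let f : [0,∞) → ℝ be continuous and integrable (extended by 0 to (−∞,0)). Define Ψ(t,x) := (1/(σ√(2πt))) exp(−(x + μt)²/(2σ²t)) for t > 0, and for t > 0, x ≥ 0 set ṽ(t,x) := (f * Ψ(t,·))(x) − exp(−2μx/σ²) (f * Ψ(t,·))(−x), where (f * h)(z) := ∫₀^∞ f(y) h(z − y) dy. Then for all t > 0: ṽ(t,0) = 0, and for all x ≥ 0, ∂_t ṽ(t,x) = μ ∂_x ṽ(t,x) + (σ²/2) ∂_x² ṽ(t,x). That is, ṽ solves the advection–diffusion equation on the half line with homogeneous Dirichlet boundary condition at x = 0. -/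
/-! The drifted Gaussian `Ψ` solves `∂ₜΨ = μ ∂ₓΨ + σ²/2 ∂ₓ²Ψ`, and on a time interval `[a, b]`
with `a > 0` it is bounded together with its first two space derivatives, uniformly in `x`.
As `f` is integrable, dominated convergence lets us differentiate
`u(t, x) = ∫₀^∞ f(y) Ψ(t, x - y) dy` under the integral sign, so `u` solves the equation on all
of `ℝ`. The reflection `u ↦ e^{-2μx/σ²} u(t, -x)` commutes with `μ ∂ₓ + σ²/2 ∂ₓ²` (the exponent
is the one for which the zeroth-order terms cancel), so `ṽ = u - e^{-2μx/σ²} u(t, -x)` solves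
it as well, and `ṽ(t, 0) = 0` by construction. -/

open Real MeasureTheory Set Filter Metric Topology

theorem sq_mul_exp_neg_sq_div_le {c : ℝ} (hc : 0 < c) (w : ℝ) :
    w ^ 2 * exp (-w ^ 2 / c) ≤ c := by
  have h := add_one_le_exp (w ^ 2 / c)
  rw [neg_div, exp_neg, ← div_eq_mul_inv, div_le_iff₀ (exp_pos _)]
  have : w ^ 2 = c * (w ^ 2 / c) := by field_simp
  nlinarith

noncomputable def driftGaussian (μ σ t z : ℝ) : ℝ :=
  1 / (σ * √(2 * π * t)) * exp (-(z + μ * t) ^ 2 / (2 * σ ^ 2 * t))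

noncomputable def driftGaussianDx (μ σ t z : ℝ) : ℝ :=
  -(z + μ * t) / (σ ^ 2 * t) * driftGaussian μ σ t z

noncomputable def driftGaussianDxx (μ σ t z : ℝ) : ℝ :=
  ((z + μ * t) ^ 2 / (σ ^ 2 * t) ^ 2 - 1 / (σ ^ 2 * t)) * driftGaussian μ σ t z

namespace driftGaussian

variable {μ σ a t : ℝ}

@[fun_prop]
theorem continuous : Continuous (driftGaussian μ σ t) := by
  unfold driftGaussian; fun_prop

@[fun_prop]
theorem continuous_dx : Continuous (driftGaussianDx μ σ t) := by
  unfold driftGaussianDx; fun_prop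

@[fun_prop]
theorem continuous_dxx : Continuous (driftGaussianDxx μ σ t) := by
  unfold driftGaussianDxx; fun_prop

theorem hasDerivAt_dx (z : ℝ) :
    HasDerivAt (driftGaussian μ σ t) (driftGaussianDx μ σ t z) z := by
  have h : HasDerivAt (driftGaussian μ σ t) _ z :=
    ((((hasDerivAt_id' z).add_const (μ * t)).pow 2).neg.div_const
      (2 * σ ^ 2 * t)).exp.const_mul (1 / (σ * √(2 * π * t)))
  refine h.congr_deriv ?_
  simp only [driftGaussianDx, driftGaussian, Pi.neg_apply, Pi.pow_apply]
  ring

theorem hasDerivAt_dxx (z : ℝ) :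
    HasDerivAt (driftGaussianDx μ σ t) (driftGaussianDxx μ σ t z) z := by
  have h : HasDerivAt (driftGaussianDx μ σ t) _ z :=
    (((hasDerivAt_id' z).add_const (μ * t)).neg.div_const (σ ^ 2 * t)).mul (hasDerivAt_dx z)
  refine h.congr_deriv ?_
  simp only [driftGaussianDxx, driftGaussianDx, Pi.neg_apply]
  ring

theorem hasDerivAt_time (hσ : σ ≠ 0) (ht : 0 < t) (z : ℝ) :
    HasDerivAt (fun τ => driftGaussian μ σ τ z)
      (μ * driftGaussianDx μ σ t z + σ ^ 2 / 2 * driftGaussianDxx μ σ t z) t := by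
  have h2πt : 0 < 2 * π * t := by positivity
  have hA := ((((hasDerivAt_id' t).const_mul (2 * π)).sqrt h2πt.ne').const_mul σ).inv
    (by positivity)
  have hE := ((((hasDerivAt_id' t).const_mul μ).const_add z).pow 2).neg.div
    ((hasDerivAt_id' t).const_mul (2 * σ ^ 2)) (by positivity)
  have h : HasDerivAt (fun τ => driftGaussian μ σ τ z) _ t := (hA.const_mul 1).mul hE.exp
  refine h.congr_deriv ?_
  have hs : √(2 * π * t) ^ 2 = 2 * π * t := sq_sqrt h2πt.le
  simp only [driftGaussianDxx, driftGaussianDx, driftGaussian, Pi.neg_apply, Pi.pow_apply,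
    Pi.inv_apply, Pi.div_apply]
  field_simp
  rw [hs]
  ring

theorem pos (hσ : 0 < σ) (ht : 0 < t) (z : ℝ) : 0 < driftGaussian μ σ t z := by
  unfold driftGaussian; positivity

theorem le_one_div_of_le (hσ : 0 < σ) (ha : 0 < a) (hat : a ≤ t) (z : ℝ) :
    driftGaussian μ σ t z ≤ 1 / (σ * √(2 * π * a)) := by
  have hexp : exp (-(z + μ * t) ^ 2 / (2 * σ ^ 2 * t)) ≤ 1 := by
    rw [exp_le_one_iff]
    apply div_nonpos_of_nonpos_of_nonneg <;> nlinarith [sq_nonneg (z + μ * t)]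
  calc driftGaussian μ σ t z ≤ 1 / (σ * √(2 * π * a)) * 1 := by unfold driftGaussian; gcongr
    _ = _ := mul_one _

theorem sq_mul_le (hσ : 0 < σ) (ha : 0 < a) (hat : a ≤ t) (z : ℝ) :
    (z + μ * t) ^ 2 * driftGaussian μ σ t z ≤ 2 * σ ^ 2 * t * (1 / (σ * √(2 * π * a))) := by
  have ht : 0 < t := ha.trans_le hat
  have hexp := sq_mul_exp_neg_sq_div_le (by positivity : 0 < 2 * σ ^ 2 * t) (z + μ * t)
  calc _ = 1 / (σ * √(2 * π * t)) *
        ((z + μ * t) ^ 2 * exp (-(z + μ * t) ^ 2 / (2 * σ ^ 2 * t))) := by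
        unfold driftGaussian; ring
    _ ≤ 1 / (σ * √(2 * π * a)) * (2 * σ ^ 2 * t) := by gcongr
    _ = _ := mul_comm _ _

theorem abs_dx_le (hσ : 0 < σ) (ht : 0 < t) (z : ℝ) :
    |driftGaussianDx μ σ t z| ≤
      (driftGaussian μ σ t z + (z + μ * t) ^ 2 * driftGaussian μ σ t z) / (σ ^ 2 * t) := by
  have hg := pos (μ := μ) hσ ht z
  have habs : |z + μ * t| ≤ 1 + (z + μ * t) ^ 2 := by
    nlinarith [sq_abs (z + μ * t), sq_nonneg (|z + μ * t| - 1)]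
  rw [driftGaussianDx, abs_mul, abs_div, abs_neg, abs_of_pos hg,
    abs_of_pos (by positivity : 0 < σ ^ 2 * t), div_mul_eq_mul_div]
  gcongr
  nlinarith

theorem abs_dxx_le (hσ : 0 < σ) (ht : 0 < t) (z : ℝ) :
    |driftGaussianDxx μ σ t z| ≤
      (z + μ * t) ^ 2 * driftGaussian μ σ t z / (σ ^ 2 * t) ^ 2 +
        driftGaussian μ σ t z / (σ ^ 2 * t) := by
  have hg := pos (μ := μ) hσ ht z
  rw [driftGaussianDxx, abs_mul, abs_of_pos hg]
  refine (mul_le_mul_of_nonneg_right (abs_sub _ _) hg.le).trans_eq ?_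
  rw [abs_of_nonneg (by positivity), abs_of_nonneg (by positivity)]
  ring

theorem exists_abs_le (hσ : 0 < σ) (ha : 0 < a) (b : ℝ) : ∃ C, ∀ t ∈ Icc a b, ∀ z,
    |driftGaussian μ σ t z| ≤ C ∧ |driftGaussianDx μ σ t z| ≤ C ∧
      |driftGaussianDxx μ σ t z| ≤ C := by
  set A := 1 / (σ * √(2 * π * a))
  set M := 2 * σ ^ 2 * b * A
  set s := σ ^ 2 * a
  have hs : 0 < s := by positivity
  refine ⟨A + (A + M) / s + (M / s ^ 2 + A / s), fun t ⟨hat, htb⟩ z => ?_⟩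
  have ht : 0 < t := ha.trans_le hat
  have hg := pos (μ := μ) hσ ht z
  have hgA : driftGaussian μ σ t z ≤ A := le_one_div_of_le hσ ha hat z
  have hwg : (z + μ * t) ^ 2 * driftGaussian μ σ t z ≤ M :=
    (sq_mul_le hσ ha hat z).trans (by simp only [M]; gcongr)
  have hM : 0 ≤ M := (mul_nonneg (sq_nonneg _) hg.le).trans hwg
  have hst : s ≤ σ ^ 2 * t := by simp only [s]; gcongr
  have hdx : |driftGaussianDx μ σ t z| ≤ (A + M) / s :=
    (abs_dx_le hσ ht z).trans (by gcongr)
  have hdxx : |driftGaussianDxx μ σ t z| ≤ M / s ^ 2 + A / s :=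
    (abs_dxx_le hσ ht z).trans (by gcongr)
  have hdx₀ := (abs_nonneg _).trans hdx
  have hdxx₀ := (abs_nonneg _).trans hdxx
  refine ⟨?_, by linarith, by linarith⟩
  rw [abs_of_pos hg]
  linarith

end driftGaussian

section DerivIntegral

variable {α : Type*} [MeasurableSpace α] {ν : Measure α} {f : α → ℝ}

theorem hasDerivAt_integral_mul_of_bounded (hf : Integrable f ν) {K K' : ℝ → α → ℝ}
    {s₀ ε B C : ℝ} (hε : 0 < ε) (hK : ∀ s ∈ ball s₀ ε, AEStronglyMeasurable (K s) ν)
    (hK' : AEStronglyMeasurable (K' s₀) ν) (hK_le : ∀ y, ‖K s₀ y‖ ≤ B)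
    (hK'_le : ∀ s ∈ ball s₀ ε, ∀ y, ‖K' s y‖ ≤ C)
    (hK_deriv : ∀ s ∈ ball s₀ ε, ∀ y, HasDerivAt (K · y) (K' s y) s) :
    HasDerivAt (fun s => ∫ y, f y * K s y ∂ν) (∫ y, f y * K' s₀ y ∂ν) s₀ := by
  refine (hasDerivAt_integral_of_dominated_loc_of_deriv_le (F := fun s y => f y * K s y)
    (F' := fun s y => f y * K' s y) (bound := fun y => ‖f y‖ * C) (ball_mem_nhds s₀ hε)
    ?_ ?_ (hf.aestronglyMeasurable.mul hK') ?_ (hf.norm.mul_const C) ?_).2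
  · filter_upwards [ball_mem_nhds s₀ hε] with s hs
    exact hf.aestronglyMeasurable.mul (hK s hs)
  · exact hf.mul_bdd (hK s₀ (mem_ball_self hε)) (ae_of_all _ hK_le)
  · refine ae_of_all _ fun y s hs => ?_
    rw [norm_mul]
    gcongr
    exact hK'_le s hs y
  · exact ae_of_all _ fun y s hs => (hK_deriv s hs y).const_mul (f y)

end DerivIntegral

section Convolution

variable {ν : Measure ℝ} {f : ℝ → ℝ}

theorem integrable_mul_comp_sub (hf : Integrable f ν) {k : ℝ → ℝ} {C : ℝ} (hk : Continuous k)
    (hk_le : ∀ z, |k z| ≤ C) (x : ℝ) : Integrable (fun y => f y * k (x - y)) ν :=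
  hf.mul_bdd (hk.comp (continuous_sub_left x)).aestronglyMeasurable
    (ae_of_all _ fun y => hk_le (x - y))

theorem hasDerivAt_integral_mul_comp_sub (hf : Integrable f ν) {k k' : ℝ → ℝ} {C : ℝ}
    (hk : ∀ z, HasDerivAt k (k' z) z) (hk_le : ∀ z, |k z| ≤ C) (hk'_le : ∀ z, |k' z| ≤ C)
    (x : ℝ) :
    HasDerivAt (fun x => ∫ y, f y * k (x - y) ∂ν) (∫ y, f y * k' (x - y) ∂ν) x := by
  have hk_cont : Continuous k := continuous_iff_continuousAt.2 fun z => (hk z).continuousAt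
  have hk'_meas : Measurable k' := by
    rw [show k' = deriv k from funext fun z => (hk z).deriv.symm]
    exact measurable_deriv k
  exact hasDerivAt_integral_mul_of_bounded hf one_pos
    (fun s _ => (hk_cont.comp (continuous_sub_left s)).aestronglyMeasurable)
    (hk'_meas.comp (measurable_const.sub measurable_id)).aestronglyMeasurable
    (B := C) (fun y => hk_le (x - y)) (fun s _ y => hk'_le (s - y))
    fun s _ y => (hk (s - y)).comp_sub_const s y

end Convolution

theorem hasDerivAt_exp_mul_mul_comp_neg {g : ℝ → ℝ} {g' : ℝ} (c : ℝ) {x : ℝ}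
    (hg : HasDerivAt g g' (-x)) :
    HasDerivAt (fun x => exp (c * x) * g (-x)) (exp (c * x) * (c * g (-x) - g')) x := by
  have hneg : HasDerivAt (fun x => g (-x)) (-g') x := by
    simpa [Function.comp_def] using hg.comp x (hasDerivAt_neg x)
  exact (((hasDerivAt_id' x).const_mul c).exp.mul hneg).congr_deriv (by ring)

structure SolvesAdvectionDiffusionAt (μ σ : ℝ) (u : ℝ → ℝ → ℝ) (t : ℝ) : Prop where
  differentiable : Differentiable ℝ (u t)
  differentiable_deriv : Differentiable ℝ (deriv (u t))
  hasDerivAt_time : ∀ x, HasDerivAt (u · x)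
    (μ * deriv (u t) x + σ ^ 2 / 2 * deriv (deriv (u t)) x) t

namespace SolvesAdvectionDiffusionAt

variable {μ σ t : ℝ} {u w : ℝ → ℝ → ℝ}

theorem congr (hu : SolvesAdvectionDiffusionAt μ σ u t) (h : ∀ᶠ τ in 𝓝 t, w τ = u τ) :
    SolvesAdvectionDiffusionAt μ σ w t := by
  have ht : w t = u t := h.self_of_nhds
  refine ⟨ht ▸ hu.differentiable, ht ▸ hu.differentiable_deriv, fun x => ?_⟩
  rw [ht]
  exact (hu.hasDerivAt_time x).congr_of_eventuallyEq (h.mono fun τ hτ => congrFun hτ x)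

theorem sub (hu : SolvesAdvectionDiffusionAt μ σ u t) (hw : SolvesAdvectionDiffusionAt μ σ w t) :
    SolvesAdvectionDiffusionAt μ σ (fun τ x => u τ x - w τ x) t := by
  have hd : deriv (fun x => u t x - w t x) = fun x => deriv (u t) x - deriv (w t) x :=
    funext fun x => ((hu.differentiable x).hasDerivAt.sub (hw.differentiable x).hasDerivAt).deriv
  have hdd : deriv (fun x => deriv (u t) x - deriv (w t) x) =
      fun x => deriv (deriv (u t)) x - deriv (deriv (w t)) x :=
    funext fun x => ((hu.differentiable_deriv x).hasDerivAt.sub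
      (hw.differentiable_deriv x).hasDerivAt).deriv
  refine ⟨hu.differentiable.sub hw.differentiable,
    hd ▸ hu.differentiable_deriv.sub hw.differentiable_deriv, fun x => ?_⟩
  rw [hd, hdd]
  exact ((hu.hasDerivAt_time x).sub (hw.hasDerivAt_time x)).congr_deriv (by ring)

theorem reflect (hσ : σ ≠ 0) (hu : SolvesAdvectionDiffusionAt μ σ u t) :
    SolvesAdvectionDiffusionAt μ σ (fun τ x => exp (-2 * μ / σ ^ 2 * x) * u τ (-x)) t := by
  set c := -2 * μ / σ ^ 2 with hc
  set u' := deriv (u t)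
  set u'' := deriv u'
  have h1 (x : ℝ) : HasDerivAt (fun x => exp (c * x) * u t (-x))
      (exp (c * x) * (c * u t (-x) - u' (-x))) x :=
    hasDerivAt_exp_mul_mul_comp_neg c (hu.differentiable (-x)).hasDerivAt
  have h2 (x : ℝ) : HasDerivAt (fun x => exp (c * x) * (c * u t (-x) - u' (-x)))
      (exp (c * x) * (c * (c * u t (-x) - u' (-x)) - (c * u' (-x) - u'' (-x)))) x :=
    hasDerivAt_exp_mul_mul_comp_neg c (g := fun z => c * u t z - u' z)
      (((hu.differentiable (-x)).hasDerivAt.const_mul c).sub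
        (hu.differentiable_deriv (-x)).hasDerivAt)
  have hd : deriv (fun x => exp (c * x) * u t (-x)) =
      fun x => exp (c * x) * (c * u t (-x) - u' (-x)) :=
    funext fun x => (h1 x).deriv
  refine ⟨fun x => (h1 x).differentiableAt, hd ▸ fun x => (h2 x).differentiableAt,
    fun x => ?_⟩
  rw [hd, (h2 x).deriv]
  refine ((hu.hasDerivAt_time (-x)).const_mul (exp (c * x))).congr_deriv ?_
  rw [hc]
  field_simp
  ring

end SolvesAdvectionDiffusionAt

section DriftGaussianConvolution

variable {ν : Measure ℝ} {f : ℝ → ℝ} {μ σ t : ℝ}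

theorem hasDerivAt_integral_mul_driftGaussian_time (hσ : 0 < σ) (hf : Integrable f ν)
    (ht : 0 < t) (x : ℝ) :
    HasDerivAt (fun τ => ∫ y, f y * driftGaussian μ σ τ (x - y) ∂ν)
      (μ * ∫ y, f y * driftGaussianDx μ σ t (x - y) ∂ν +
        σ ^ 2 / 2 * ∫ y, f y * driftGaussianDxx μ σ t (x - y) ∂ν) t := by
  obtain ⟨C, hC⟩ := driftGaussian.exists_abs_le (μ := μ) hσ (half_pos ht) (3 * t / 2)
  have hIcc : ∀ s ∈ ball t (t / 2), s ∈ Icc (t / 2) (3 * t / 2) := fun s hs => by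
    rw [Real.ball_eq_Ioo] at hs
    constructor <;> linarith [hs.1, hs.2]
  have hC_t := hC t (hIcc t (mem_ball_self (half_pos ht)))
  have hgen := hasDerivAt_integral_mul_of_bounded hf (half_pos ht)
    (K := fun s y => driftGaussian μ σ s (x - y))
    (K' := fun s y =>
      μ * driftGaussianDx μ σ s (x - y) + σ ^ 2 / 2 * driftGaussianDxx μ σ s (x - y))
    (C := (|μ| + σ ^ 2 / 2) * C)
    (fun s _ => (driftGaussian.continuous.comp (continuous_sub_left x)).aestronglyMeasurable)
    (by fun_prop) (fun y => (hC_t (x - y)).1) ?bound ?deriv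
  case bound =>
    intro s hs y
    obtain ⟨-, hdx, hdxx⟩ := hC s (hIcc s hs) (x - y)
    calc _ ≤ |μ| * |driftGaussianDx μ σ s (x - y)| +
          σ ^ 2 / 2 * |driftGaussianDxx μ σ s (x - y)| := by
          refine (norm_add_le _ _).trans_eq ?_
          simp only [norm_mul, Real.norm_eq_abs, abs_of_nonneg (by positivity : 0 ≤ σ ^ 2 / 2)]
      _ ≤ _ := by rw [add_mul]; gcongr
  case deriv =>
    intro s hs y
    exact driftGaussian.hasDerivAt_time hσ.ne' ((half_pos ht).trans_le (hIcc s hs).1) (x - y)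
  convert hgen using 1
  simp only [mul_add, mul_left_comm (f _)]
  have hint_dx :=
    integrable_mul_comp_sub hf driftGaussian.continuous_dx (fun z => (hC_t z).2.1) x
  have hint_dxx :=
    integrable_mul_comp_sub hf driftGaussian.continuous_dxx (fun z => (hC_t z).2.2) x
  rw [integral_add (hint_dx.const_mul μ) (hint_dxx.const_mul _), integral_const_mul,
    integral_const_mul]

theorem solvesAdvectionDiffusionAt_integral_mul_driftGaussian (hσ : 0 < σ)
    (hf : Integrable f ν) (ht : 0 < t) :
    SolvesAdvectionDiffusionAt μ σ (fun τ x => ∫ y, f y * driftGaussian μ σ τ (x - y) ∂ν) t := by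
  obtain ⟨C, hC⟩ := driftGaussian.exists_abs_le (μ := μ) hσ ht t
  have hC_t := hC t ⟨le_rfl, le_rfl⟩
  have hx (x : ℝ) : HasDerivAt (fun x => ∫ y, f y * driftGaussian μ σ t (x - y) ∂ν)
      (∫ y, f y * driftGaussianDx μ σ t (x - y) ∂ν) x :=
    hasDerivAt_integral_mul_comp_sub hf driftGaussian.hasDerivAt_dx (fun z => (hC_t z).1)
      (fun z => (hC_t z).2.1) x
  have hxx (x : ℝ) : HasDerivAt (fun x => ∫ y, f y * driftGaussianDx μ σ t (x - y) ∂ν)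
      (∫ y, f y * driftGaussianDxx μ σ t (x - y) ∂ν) x :=
    hasDerivAt_integral_mul_comp_sub hf driftGaussian.hasDerivAt_dxx (fun z => (hC_t z).2.1)
      (fun z => (hC_t z).2.2) x
  have hd : deriv (fun x => ∫ y, f y * driftGaussian μ σ t (x - y) ∂ν) =
      fun x => ∫ y, f y * driftGaussianDx μ σ t (x - y) ∂ν :=
    funext fun x => (hx x).deriv
  refine ⟨fun x => (hx x).differentiableAt, hd ▸ fun x => (hxx x).differentiableAt,
    fun x => ?_⟩
  rw [hd, (hxx x).deriv]
  exact hasDerivAt_integral_mul_driftGaussian_time hσ hf ht x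

end DriftGaussianConvolution

theorem reflected_convolution_solves_dirichlet_advection_diffusion_general
    (μ σ : ℝ) (hσ : 0 < σ)
    (f : ℝ → ℝ)
    (hf_int : MeasureTheory.Integrable f)
    (Ψ : ℝ → ℝ → ℝ)
    (hΨ : ∀ t : ℝ, 0 < t → ∀ x : ℝ,
      Ψ t x = (1 / (σ * Real.sqrt (2 * Real.pi * t))) *
        Real.exp (-(x + μ * t) ^ 2 / (2 * σ ^ 2 * t)))
    (v : ℝ → ℝ → ℝ)
    (hv : ∀ t : ℝ, 0 < t → ∀ x : ℝ,
      v t x = (∫ y in Set.Ioi (0:ℝ), f y * Ψ t (x - y)) -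
        Real.exp (-2 * μ * x / σ ^ 2) * ∫ y in Set.Ioi (0:ℝ), f y * Ψ t (-x - y)) :
    ∀ t : ℝ, 0 < t →
      v t 0 = 0 ∧
      ∀ x : ℝ, 0 ≤ x →
        HasDerivAt (fun τ => v τ x)
          (μ * deriv (v t) x + σ ^ 2 / 2 * deriv (deriv (v t)) x) t := by
  intro t ht
  refine ⟨by simp [hv t ht], fun x _ => ?_⟩
  have hu := solvesAdvectionDiffusionAt_integral_mul_driftGaussian (μ := μ) hσ
    (hf_int.integrableOn (s := Ioi 0)) ht
  have hv_eq : ∀ᶠ τ in 𝓝 t, v τ = fun x =>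
      (∫ y in Ioi 0, f y * driftGaussian μ σ τ (x - y)) -
        exp (-2 * μ / σ ^ 2 * x) * ∫ y in Ioi 0, f y * driftGaussian μ σ τ (-x - y) := by
    filter_upwards [lt_mem_nhds ht] with τ hτ
    ext x
    simp only [hv τ hτ x, hΨ τ hτ, mul_div_right_comm _ x]
    rfl
  exact ((hu.sub (hu.reflect hσ.ne')).congr hv_eq).hasDerivAt_time x

theorem reflected_convolution_solves_dirichlet_advection_diffusion
    (μ σ : ℝ) (hσ : 0 < σ)
    (f : ℝ → ℝ) (hf_cont : ContinuousOn f (Set.Ici 0))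
    (hf_zero : ∀ x : ℝ, x < 0 → f x = 0)
    (hf_int : MeasureTheory.Integrable f)
    (Ψ : ℝ → ℝ → ℝ)
    (hΨ : ∀ t : ℝ, 0 < t → ∀ x : ℝ,
      Ψ t x = (1 / (σ * Real.sqrt (2 * Real.pi * t))) *
        Real.exp (-(x + μ * t) ^ 2 / (2 * σ ^ 2 * t)))
    (v : ℝ → ℝ → ℝ)
    (hv : ∀ t : ℝ, 0 < t → ∀ x : ℝ,
      v t x = (∫ y in Set.Ioi (0:ℝ), f y * Ψ t (x - y)) -
        Real.exp (-2 * μ * x / σ ^ 2) * ∫ y in Set.Ioi (0:ℝ), f y * Ψ t (-x - y)) :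
    ∀ t : ℝ, 0 < t →
      v t 0 = 0 ∧
      ∀ x : ℝ, 0 ≤ x →
        HasDerivAt (fun τ => v τ x)
          (μ * deriv (v t) x + σ ^ 2 / 2 * deriv (deriv (v t)) x) t :=
  reflected_convolution_solves_dirichlet_advection_diffusion_general μ σ hσ f hf_int Ψ hΨ v hv
end

section
/- Let μ ∈ ℝ, σ > 0, and define Ψ(t,x) := (1/(σ√(2πt))) exp(−(x + μt)²/(2σ²t)) for t > 0. Let f : ℝ → ℝ be continuous with compact support contained in (0,∞). Then for every x ≥ 0: lim_{t → 0⁺} [ (f * Ψ(t,·))(x) − exp(−2μx/σ²) (f * Ψ(t,·))(−x) ] = f(x), where (f * h)(z) := ∫₀^∞ f(y) h(z − y) dy. -/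
open MeasureTheory ProbabilityTheory Real Filter Set Topology
open scoped NNReal

/-!
For `t > 0`, `y ↦ Ψ t (z - y)` is the density of the Gaussian law `N(z + μt, σ²t)`, so
`(f * Ψ(t,·))(z)` is the expectation of `f` under that law, i.e. of `f (z + μt + σ√t U)` with
`U` standard normal; by dominated convergence it tends to `f z` as `t → 0⁺`. At `z = -x ≤ 0`
the limit is `f (-x) = 0`, since `f` vanishes off `(0, ∞)`, so the reflected term drops out.
-/

lemma gaussianReal_eq_map_const_add_mul (m : ℝ) (v : ℝ≥0) :
    gaussianReal m v = (gaussianReal 0 1).map (fun u => m + √v * u) := by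
  rw [← Function.comp_def (m + ·) (√v * ·),
    ← Measure.map_map (measurable_const_add m) (measurable_const_mul _),
    gaussianReal_map_const_mul, gaussianReal_map_const_add, mul_zero, zero_add]
  congr
  ext
  simp

theorem tendsto_integral_gaussianReal {E : Type*} [NormedAddCommGroup E] [NormedSpace ℝ E]
    [CompleteSpace E] {ι : Type*} {l : Filter ι} [l.IsCountablyGenerated]
    {f : ℝ → E} (hf : Continuous f) {C : ℝ} (hC : ∀ y, ‖f y‖ ≤ C)
    {m : ι → ℝ} {v : ι → ℝ≥0} {z : ℝ} (hm : Tendsto m l (𝓝 z)) (hv : Tendsto v l (𝓝 0)) :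
    Tendsto (fun i => ∫ y, f y ∂gaussianReal (m i) (v i)) l (𝓝 (f z)) := by
  have hcont : ∀ i, Continuous fun u : ℝ => m i + √(v i : ℝ) * u := fun i => by fun_prop
  have hmap : ∀ i, ∫ y, f y ∂gaussianReal (m i) (v i) =
      ∫ u, f (m i + √(v i : ℝ) * u) ∂gaussianReal 0 1 := fun i => by
    rw [gaussianReal_eq_map_const_add_mul,
      integral_map (hcont i).aemeasurable hf.aestronglyMeasurable]
  simp_rw [hmap]
  have hz : ∫ _ : ℝ, f z ∂gaussianReal 0 1 = f z := by
    rw [integral_const, probReal_univ, one_smul]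
  rw [← hz]
  refine tendsto_integral_filter_of_dominated_convergence (fun _ => C)
    (Eventually.of_forall fun i => (hf.comp (hcont i)).aestronglyMeasurable)
    (Eventually.of_forall fun i => ae_of_all _ fun u => hC _) (integrable_const C)
    (ae_of_all _ fun u => ?_)
  have hsqrt : Tendsto (fun i => √(v i : ℝ)) l (𝓝 0) := by
    simpa using (NNReal.continuous_coe.tendsto 0).comp hv |>.sqrt
  simpa [Function.comp_def] using (hf.tendsto z).comp (by simpa using hm.add (hsqrt.mul_const u))

lemma driftedHeatKernel_eq_gaussianPDFReal {σ t : ℝ} (hσ : 0 < σ) (ht : 0 < t) (μ z y : ℝ) :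
    1 / (σ * √(2 * π * t)) * rexp (-(z - y + μ * t) ^ 2 / (2 * σ ^ 2 * t)) =
      gaussianPDFReal (z + μ * t) (σ ^ 2 * t).toNNReal y := by
  rw [gaussianPDFReal, Real.coe_toNNReal _ (by positivity),
    show 2 * π * (σ ^ 2 * t) = σ ^ 2 * (2 * π * t) by ring, Real.sqrt_mul (sq_nonneg σ),
    Real.sqrt_sq hσ.le, one_div]
  congr 3 <;> ring

lemma tendsto_setIntegral_mul_driftedHeatKernel {μ σ : ℝ} (hσ : 0 < σ) {f : ℝ → ℝ}
    (hf : Continuous f) {C : ℝ} (hC : ∀ y, ‖f y‖ ≤ C) {s : Set ℝ} (hfs : ∀ y ∉ s, f y = 0)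
    (z : ℝ) :
    Tendsto (fun t => ∫ y in s, f y *
        (1 / (σ * √(2 * π * t)) * rexp (-(z - y + μ * t) ^ 2 / (2 * σ ^ 2 * t))))
      (𝓝[>] 0) (𝓝 (f z)) := by
  have hmean : Tendsto (fun t : ℝ => z + μ * t) (𝓝[>] 0) (𝓝 z) :=
    tendsto_nhdsWithin_of_tendsto_nhds
      ((by fun_prop : Continuous fun t : ℝ => z + μ * t).tendsto' 0 z (by simp))
  have hvar : Tendsto (fun t : ℝ => (σ ^ 2 * t).toNNReal) (𝓝[>] 0) (𝓝 0) :=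
    tendsto_nhdsWithin_of_tendsto_nhds
      ((by fun_prop : Continuous fun t : ℝ => (σ ^ 2 * t).toNNReal).tendsto' 0 0 (by simp))
  refine (tendsto_integral_gaussianReal hf hC hmean hvar).congr' ?_
  filter_upwards [self_mem_nhdsWithin] with t (ht : 0 < t)
  have hv : (σ ^ 2 * t).toNNReal ≠ 0 := (Real.toNNReal_pos.2 (by positivity)).ne'
  rw [setIntegral_eq_integral_of_forall_compl_eq_zero fun y hy => by simp [hfs y hy],
    integral_gaussianReal_eq_integral_smul hv]
  congr with y
  rw [driftedHeatKernel_eq_gaussianPDFReal hσ ht, smul_eq_mul, mul_comm]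

theorem reflected_convolution_initial_condition
    (μ σ : ℝ) (hσ : 0 < σ)
    (f : ℝ → ℝ) (hf_cont : Continuous f) (hf_supp : HasCompactSupport f)
    (hf_supp' : tsupport f ⊆ Set.Ioi 0)
    (Ψ : ℝ → ℝ → ℝ)
    (hΨ : ∀ t : ℝ, 0 < t → ∀ x : ℝ,
      Ψ t x = (1 / (σ * Real.sqrt (2 * Real.pi * t))) *
        Real.exp (-(x + μ * t) ^ 2 / (2 * σ ^ 2 * t)))
    (x : ℝ) (hx : 0 ≤ x) :
    Filter.Tendsto
      (fun t => (∫ y in Set.Ioi (0:ℝ), f y * Ψ t (x - y)) -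
        Real.exp (-2 * μ * x / σ ^ 2) * ∫ y in Set.Ioi (0:ℝ), f y * Ψ t (-x - y))
      (nhdsWithin 0 (Set.Ioi 0)) (nhds (f x)) := by
  obtain ⟨C, hC⟩ := hf_cont.bounded_above_of_compact_support hf_supp
  have hf_zero : ∀ y ∉ Ioi 0, f y = 0 := fun y hy =>
    image_eq_zero_of_notMem_tsupport fun h => hy (hf_supp' h)
  have hconv : ∀ z, Tendsto (fun t => ∫ y in Ioi 0, f y * Ψ t (z - y)) (𝓝[>] 0) (𝓝 (f z)) :=
    fun z => (tendsto_setIntegral_mul_driftedHeatKernel hσ hf_cont hC hf_zero z).congr'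
      (eventually_nhdsWithin_of_forall fun t ht => setIntegral_congr_fun measurableSet_Ioi
        fun y _ => by rw [hΨ t ht])
  have hreflected : f (-x) = 0 := hf_zero _ (by simpa using hx)
  simpa [hreflected] using (hconv x).sub ((hconv (-x)).const_mul (rexp (-2 * μ * x / σ ^ 2)))
end

section
/- Let b, δ, N > 0, g a probability density on [0,δ] with moments m₁, m₂; set μ := b m₁ and σ² := b m₂/N. Let λ > 0 with N ≥ λ m₂/m₁, let λ_N := λ(1 − λσ²/(2μ)) = λ(1 − λ m₂/(2 m₁ N)), and let λ' ∈ [0, 2μ/σ² − 2λ). Let f : [0,∞) → ℝ be continuous and integrable with |f(x)| ≤ D e^{−λx}(1 − e^{−λ'x}) for all x ≥ 0, for some D > 0. Define v(0,·) := f and, for t > 0 and x ≥ 0, v(t,x) := (f * Ψ(t,·))(x) − exp(−2μx/σ²)(f * Ψ(t,·))(−x), where Ψ(t,y) := (1/(σ√(2πt))) exp(−(y + μt)²/(2σ²t)) and (f * h)(z) := ∫₀^∞ f(y) h(z − y) dy. Then for all t ≥ 0 and x ≥ 0: |v(t,x)| ≤ D exp(−μ λ_N t) ( e^{−λx} − e^{−(2μ/σ²)(λ_N/λ)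 x} ). -/
/-!
For `t > 0`, `v(t, x) = ∫₀^∞ f(y) K(x, y) dy` with the image kernel
`K(x, y) = Ψ(t, x - y) - exp(-2μx/σ²) Ψ(t, -x - y)`, which is nonnegative for `x, y ≥ 0`
(`Ψ(t, ·)` is the density of `N(-μt, σ²t)`). Put `Λ = 2μ/σ² - λ = (2μ/σ²)(λ_N/λ)`; since
`Λ ≥ λ + λ'`, the hypothesis on `f` gives `|f(y)| ≤ D F(y)` with `F(y) = e^{-λy} - e^{-Λy}`.
Because `λ + Λ = 2μ/σ²`, `F` is antisymmetric in the sense `F(-y) = -e^{(λ+Λ)y} F(y)`, and this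
is exactly what makes the image term reflect `∫₀^∞ F K` into the full convolution `(F ⋆ Ψ)(x)`.
A Gaussian multiplies `e^{-ay}` by `exp(a²σ²t/2 - aμt)`, and for `a = λ` and `a = Λ` this factor
is the same, `exp(-σ²tλΛ/2) = exp(-μλ_N t)`.
-/

open MeasureTheory ProbabilityTheory Real Set
open scoped NNReal

section GaussianKernel

variable {m : ℝ} {v : ℝ≥0}

lemma gaussianPDFReal_le_inv_sqrt (m : ℝ) (v : ℝ≥0) (u : ℝ) :
    gaussianPDFReal m v u ≤ (√(2 * π * v))⁻¹ := by
  refine mul_le_of_le_one_right (by positivity) (exp_le_one_iff.2 ?_)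
  exact div_nonpos_of_nonpos_of_nonneg (neg_nonpos.2 (sq_nonneg _)) (by positivity)

lemma gaussianPDFReal_neg_eq_exp_mul (m : ℝ) (v : ℝ≥0) (u : ℝ) :
    gaussianPDFReal m v (-u) = exp (-2 * m * u / v) * gaussianPDFReal m v u := by
  simp only [gaussianPDFReal]
  rw [mul_left_comm, ← exp_add]
  congr 2
  ring

lemma gaussianPDFReal_sub_eq_exp_mul (m : ℝ) (v : ℝ≥0) (x y : ℝ) :
    gaussianPDFReal m v (x - y) = exp (2 * x * (y + m) / v) * gaussianPDFReal m v (-x - y) := by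
  simp only [gaussianPDFReal]
  rw [mul_left_comm, ← exp_add]
  congr 2
  ring

/-- Completing the square: an exponential weight shifts the mean of the Gaussian. -/
lemma exp_mul_gaussianPDFReal_sub (hv : v ≠ 0) (a x y : ℝ) :
    exp (-a * y) * gaussianPDFReal m v (x - y) =
      exp (m * a + v * a ^ 2 / 2 - a * x) * gaussianPDFReal (m + v * a) v (x - y) := by
  have hv' : (v : ℝ) ≠ 0 := by exact_mod_cast hv
  simp only [gaussianPDFReal]
  rw [mul_left_comm, ← exp_add, mul_left_comm (exp _), ← exp_add]
  congr 2
  field_simp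
  ring

lemma integrable_exp_mul_gaussianPDFReal_sub (hv : v ≠ 0) (a x : ℝ) :
    Integrable (fun y ↦ exp (-a * y) * gaussianPDFReal m v (x - y)) := by
  simp_rw [exp_mul_gaussianPDFReal_sub hv]
  exact ((integrable_gaussianPDFReal _ _).comp_sub_left x).const_mul _

lemma integral_exp_mul_gaussianPDFReal_sub (hv : v ≠ 0) (a x : ℝ) :
    ∫ y, exp (-a * y) * gaussianPDFReal m v (x - y) = exp (m * a + v * a ^ 2 / 2 - a * x) := by
  simp_rw [exp_mul_gaussianPDFReal_sub hv]
  rw [integral_const_mul, integral_sub_left_eq_self (gaussianPDFReal _ v),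
    integral_gaussianPDFReal_eq_one _ hv, mul_one]

lemma integrable_sub_exp_mul_gaussianPDFReal_sub (hv : v ≠ 0) (a b x : ℝ) :
    Integrable (fun y ↦ (exp (-a * y) - exp (-b * y)) * gaussianPDFReal m v (x - y)) := by
  simp_rw [sub_mul]
  exact (integrable_exp_mul_gaussianPDFReal_sub hv a x).sub
    (integrable_exp_mul_gaussianPDFReal_sub hv b x)

lemma integral_sub_exp_mul_gaussianPDFReal_sub (hv : v ≠ 0) {a b : ℝ}
    (hab : a + b = -2 * m / v) (x : ℝ) :
    ∫ y, (exp (-a * y) - exp (-b * y)) * gaussianPDFReal m v (x - y) =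
      exp (-(v * a * b / 2)) * (exp (-a * x) - exp (-b * x)) := by
  have hm : m = -(v * (a + b) / 2) := by
    rw [hab]
    field_simp
  simp_rw [sub_mul]
  rw [integral_sub (integrable_exp_mul_gaussianPDFReal_sub hv a x)
    (integrable_exp_mul_gaussianPDFReal_sub hv b x), integral_exp_mul_gaussianPDFReal_sub hv,
    integral_exp_mul_gaussianPDFReal_sub hv, mul_sub, ← exp_add, ← exp_add, hm]
  ring_nf


/-- With `m = -μt` and `v = σ²t` this is the kernel
`Ψ(t, x - y) - exp(-2μx/σ²) Ψ(t, -x - y)` of the paper. -/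
noncomputable def imageKernel (m : ℝ) (v : ℝ≥0) (x y : ℝ) : ℝ :=
  gaussianPDFReal m v (x - y) - exp (2 * m * x / v) * gaussianPDFReal m v (-x - y)

lemma imageKernel_nonneg (m : ℝ) (v : ℝ≥0) {x y : ℝ} (hx : 0 ≤ x) (hy : 0 ≤ y) :
    0 ≤ imageKernel m v x y := by
  rw [imageKernel, gaussianPDFReal_sub_eq_exp_mul, sub_nonneg]
  refine mul_le_mul_of_nonneg_right (exp_le_exp.2 ?_) (gaussianPDFReal_nonneg _ _ _)
  have hxy : 0 ≤ 2 * x * y / v := by positivity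
  linarith [show 2 * x * (y + m) / v = 2 * m * x / v + 2 * x * y / v by ring]

lemma setIntegral_mul_imageKernel {f : ℝ → ℝ} (hf : IntegrableOn f (Ioi 0)) (x : ℝ) :
    ∫ y in Ioi 0, f y * imageKernel m v x y =
      (∫ y in Ioi 0, f y * gaussianPDFReal m v (x - y)) -
        exp (2 * m * x / v) * ∫ y in Ioi 0, f y * gaussianPDFReal m v (-x - y) := by
  have hint (z : ℝ) : IntegrableOn (fun y ↦ f y * gaussianPDFReal m v (z - y)) (Ioi 0) :=
    hf.mul_bdd ((stronglyMeasurable_gaussianPDFReal m v).measurable.comp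
        (measurable_const.sub measurable_id)).aestronglyMeasurable
      (ae_of_all _ fun y ↦ by
        rw [norm_of_nonneg (gaussianPDFReal_nonneg _ _ _)]
        exact gaussianPDFReal_le_inv_sqrt m v _)
  rw [← integral_const_mul, ← integral_sub (hint x) ((hint (-x)).const_mul _)]
  congr 1 with y
  rw [imageKernel]
  ring

/-- Method of images: by the antisymmetry `hF`, the image term of the kernel reflects the
integral over `Ioi 0` onto `Iic 0`. -/
lemma setIntegral_Ioi_mul_imageKernel {F : ℝ → ℝ}
    (hF : ∀ y, F (-y) = -(exp (-2 * m * y / v) * F y)) (x : ℝ)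
    (hFint : Integrable (fun y ↦ F y * gaussianPDFReal m v (x - y))) :
    ∫ y in Ioi 0, F y * imageKernel m v x y = ∫ y, F y * gaussianPDFReal m v (x - y) := by
  have himage (y : ℝ) : exp (2 * m * x / v) * (F y * gaussianPDFReal m v (-x - y)) =
      -(F (-y) * gaussianPDFReal m v (x - -y)) := by
    rw [hF, show x - -y = -(-x - y) by ring, gaussianPDFReal_neg_eq_exp_mul,
      show 2 * m * x / v = -2 * m * y / v + -2 * m * (-x - y) / v by ring, exp_add]
    ring
  have hrefl : IntegrableOn (fun y ↦ exp (2 * m * x / v) * (F y * gaussianPDFReal m v (-x - y)))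
      (Ioi 0) := by
    simp_rw [himage]
    exact hFint.comp_neg.neg.integrableOn
  calc ∫ y in Ioi 0, F y * imageKernel m v x y
      = (∫ y in Ioi 0, F y * gaussianPDFReal m v (x - y)) -
          ∫ y in Ioi 0, exp (2 * m * x / v) * (F y * gaussianPDFReal m v (-x - y)) := by
        rw [← integral_sub hFint.integrableOn hrefl]
        congr 1 with y
        rw [imageKernel]
        ring
    _ = (∫ y in Ioi 0, F y * gaussianPDFReal m v (x - y)) +
          ∫ y in Iic 0, F y * gaussianPDFReal m v (x - y) := by
        simp_rw [himage]
        rw [integral_neg, sub_neg_eq_add,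
          integral_comp_neg_Ioi 0 (fun y ↦ F y * gaussianPDFReal m v (x - y)), neg_zero]
    _ = ∫ y, F y * gaussianPDFReal m v (x - y) := by
        rw [add_comm, intervalIntegral.integral_Iic_add_Ioi hFint.integrableOn hFint.integrableOn]

lemma abs_setIntegral_mul_imageKernel_le (hv : v ≠ 0) {a b D x : ℝ} (hab : a + b = -2 * m / v)
    (hx : 0 ≤ x) {f : ℝ → ℝ} (hf : ∀ y, 0 ≤ y → |f y| ≤ D * (exp (-a * y) - exp (-b * y))) :
    |∫ y in Ioi 0, f y * imageKernel m v x y| ≤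
      D * exp (-(v * a * b / 2)) * (exp (-a * x) - exp (-b * x)) := by
  have hF (y : ℝ) : exp (-a * -y) - exp (-b * -y) =
      -(exp (-2 * m * y / v) * (exp (-a * y) - exp (-b * y))) := by
    rw [show -2 * m * y / v = (a + b) * y by rw [hab]; ring, mul_sub, ← exp_add, ← exp_add]
    ring_nf
  have hint : IntegrableOn
      (fun y ↦ D * ((exp (-a * y) - exp (-b * y)) * imageKernel m v x y)) (Ioi 0) := by
    refine (((integrable_sub_exp_mul_gaussianPDFReal_sub (m := m) hv a b x).sub
      ((integrable_sub_exp_mul_gaussianPDFReal_sub (m := m) hv a b (-x)).const_mul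
        (exp (2 * m * x / v)))).const_mul D).integrableOn.congr_fun (fun y _ ↦ ?_) measurableSet_Ioi
    simp only [imageKernel, Pi.sub_apply]
    ring
  rw [← Real.norm_eq_abs]
  calc ‖∫ y in Ioi 0, f y * imageKernel m v x y‖
      ≤ ∫ y in Ioi 0, D * ((exp (-a * y) - exp (-b * y)) * imageKernel m v x y) := by
        refine norm_integral_le_of_norm_le hint ((ae_restrict_iff' measurableSet_Ioi).2
          (ae_of_all _ fun y (hy : 0 < y) ↦ ?_))
        rw [norm_mul, norm_of_nonneg (imageKernel_nonneg m v hx hy.le), ← mul_assoc]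
        exact mul_le_mul_of_nonneg_right (hf y hy.le) (imageKernel_nonneg m v hx hy.le)
    _ = D * exp (-(v * a * b / 2)) * (exp (-a * x) - exp (-b * x)) := by
        rw [integral_const_mul, setIntegral_Ioi_mul_imageKernel hF x
          (integrable_sub_exp_mul_gaussianPDFReal_sub hv a b x),
          integral_sub_exp_mul_gaussianPDFReal_sub hv hab]
        ring

end GaussianKernel

lemma gaussianPDFReal_neg_mul_toNNReal {μ σ t : ℝ} (hσ : 0 < σ) (ht : 0 < t) (y : ℝ) :
    gaussianPDFReal (-(μ * t)) (σ ^ 2 * t).toNNReal y =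
      1 / (σ * √(2 * π * t)) * exp (-(y + μ * t) ^ 2 / (2 * σ ^ 2 * t)) := by
  rw [gaussianPDFReal, Real.coe_toNNReal _ (by positivity), sub_neg_eq_add, one_div,
    show 2 * π * (σ ^ 2 * t) = σ ^ 2 * (2 * π * t) by ring, sqrt_mul (sq_nonneg σ),
    sqrt_sq hσ.le, ← mul_assoc 2 (σ ^ 2)]

lemma mul_exp_mul_one_sub_exp_le {D a a' b x : ℝ} (hD : 0 ≤ D) (hx : 0 ≤ x) (hb : a + a' ≤ b) :
    D * exp (-a * x) * (1 - exp (-a' * x)) ≤ D * (exp (-a * x) - exp (-b * x)) := by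
  rw [mul_assoc, mul_one_sub, ← exp_add]
  gcongr
  nlinarith

theorem bound_second_derivative_general
    (μ σ : ℝ) (hσ : 0 < σ)
    (lam lamN lam' : ℝ) (hlam : 0 < lam)
    (hlamN : lamN = lam * (1 - lam * σ ^ 2 / (2 * μ)))
    (hlam' : lam' ∈ Set.Ico (0:ℝ) (2 * μ / σ ^ 2 - 2 * lam))
    (D : ℝ) (hD : 0 < D)
    (f : ℝ → ℝ)
    (hf_int : MeasureTheory.IntegrableOn f (Set.Ioi 0))
    (hf_bound : ∀ x : ℝ, 0 ≤ x →
      |f x| ≤ D * Real.exp (-lam * x) * (1 - Real.exp (-lam' * x)))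
    (Ψ : ℝ → ℝ → ℝ)
    (hΨ : ∀ t : ℝ, 0 < t → ∀ y : ℝ,
      Ψ t y = (1 / (σ * Real.sqrt (2 * Real.pi * t))) *
        Real.exp (-(y + μ * t) ^ 2 / (2 * σ ^ 2 * t)))
    (v : ℝ → ℝ → ℝ)
    (hv0 : ∀ x : ℝ, 0 ≤ x → v 0 x = f x)
    (hv : ∀ t : ℝ, 0 < t → ∀ x : ℝ, 0 ≤ x →
      v t x = (∫ y in Set.Ioi (0:ℝ), f y * Ψ t (x - y)) -
        Real.exp (-2 * μ * x / σ ^ 2) * ∫ y in Set.Ioi (0:ℝ), f y * Ψ t (-x - y)) :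
    ∀ t : ℝ, 0 ≤ t → ∀ x : ℝ, 0 ≤ x →
      |v t x| ≤ D * Real.exp (-μ * lamN * t) *
        (Real.exp (-lam * x) - Real.exp (-(2 * μ / σ ^ 2) * (lamN / lam) * x)) := by
  intro t ht x hx
  set Λ := 2 * μ / σ ^ 2 - lam with hΛ
  have hμ : 0 < μ := by
    have : 0 < 2 * μ / σ ^ 2 := by linarith [hlam'.1.trans_lt hlam'.2]
    linarith [(div_pos_iff_of_pos_right (by positivity)).1 this]
  have hrate : 2 * μ / σ ^ 2 * (lamN / lam) = Λ := by
    rw [hlamN, hΛ]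
    field_simp
  have hf_exp (y : ℝ) (hy : 0 ≤ y) : |f y| ≤ D * (exp (-lam * y) - exp (-Λ * y)) :=
    (hf_bound y hy).trans (mul_exp_mul_one_sub_exp_le hD.le hy (by linarith [hlam'.2]))
  rw [neg_mul (2 * μ / σ ^ 2), hrate]
  rcases ht.eq_or_lt with rfl | ht
  · simpa [hv0 x hx] using hf_exp x hx
  set V := (σ ^ 2 * t).toNNReal
  have hV : (V : ℝ) = σ ^ 2 * t := Real.coe_toNNReal _ (by positivity)
  have hV0 : V ≠ 0 := by
    rw [← NNReal.coe_ne_zero, hV]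
    positivity
  have hΨV : Ψ t = gaussianPDFReal (-(μ * t)) V :=
    funext fun y ↦ (hΨ t ht y).trans (gaussianPDFReal_neg_mul_toNNReal hσ ht y).symm
  have hdrift : -2 * μ * x / σ ^ 2 = 2 * -(μ * t) * x / V := by
    rw [hV]
    field_simp
  have hsum : lam + Λ = -2 * -(μ * t) / V := by
    rw [hV, hΛ]
    field_simp
    ring
  rw [hv t ht x hx, hΨV, hdrift, ← setIntegral_mul_imageKernel hf_int]
  convert abs_setIntegral_mul_imageKernel_le hV0 hsum hx hf_exp using 4
  rw [hV, hlamN, hΛ]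
  field_simp

theorem bound_second_derivative
    (b δ N : ℝ) (hb : 0 < b) (hδ : 0 < δ) (hN : 0 < N)
    (g : ℝ → ℝ) (hg_nonneg : ∀ v ∈ Set.Icc (0:ℝ) δ, 0 ≤ g v)
    (hg_int : IntervalIntegrable g MeasureTheory.volume 0 δ)
    (hg_prob : ∫ v in (0:ℝ)..δ, g v = 1)
    (m₁ m₂ : ℝ)
    (hm₁ : m₁ = ∫ v in (0:ℝ)..δ, v * g v)
    (hm₂ : m₂ = ∫ v in (0:ℝ)..δ, v ^ 2 * g v)
    (μ σ : ℝ) (hμ : μ = b * m₁) (hσ2 : σ ^ 2 = b * m₂ / N) (hσ : 0 < σ)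
    (lam lamN lam' : ℝ) (hlam : 0 < lam) (hNlam : N ≥ lam * m₂ / m₁)
    (hlamN : lamN = lam * (1 - lam * σ ^ 2 / (2 * μ)))
    (hlam' : lam' ∈ Set.Ico (0:ℝ) (2 * μ / σ ^ 2 - 2 * lam))
    (D : ℝ) (hD : 0 < D)
    (f : ℝ → ℝ) (hf_cont : ContinuousOn f (Set.Ici 0))
    (hf_int : MeasureTheory.IntegrableOn f (Set.Ioi 0))
    (hf_bound : ∀ x : ℝ, 0 ≤ x →
      |f x| ≤ D * Real.exp (-lam * x) * (1 - Real.exp (-lam' * x)))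
    (Ψ : ℝ → ℝ → ℝ)
    (hΨ : ∀ t : ℝ, 0 < t → ∀ y : ℝ,
      Ψ t y = (1 / (σ * Real.sqrt (2 * Real.pi * t))) *
        Real.exp (-(y + μ * t) ^ 2 / (2 * σ ^ 2 * t)))
    (v : ℝ → ℝ → ℝ)
    (hv0 : ∀ x : ℝ, 0 ≤ x → v 0 x = f x)
    (hv : ∀ t : ℝ, 0 < t → ∀ x : ℝ, 0 ≤ x →
      v t x = (∫ y in Set.Ioi (0:ℝ), f y * Ψ t (x - y)) -
        Real.exp (-2 * μ * x / σ ^ 2) * ∫ y in Set.Ioi (0:ℝ), f y * Ψ t (-x - y)) :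
    ∀ t : ℝ, 0 ≤ t → ∀ x : ℝ, 0 ≤ x →
      |v t x| ≤ D * Real.exp (-μ * lamN * t) *
        (Real.exp (-lam * x) - Real.exp (-(2 * μ / σ ^ 2) * (lamN / lam) * x)) :=
  bound_second_derivative_general μ σ hσ lam lamN lam' hlam hlamN hlam' D hD f hf_int hf_bound Ψ hΨ
    v hv0 hv
end

section
/- Let b, δ, N > 0, g a probability density on [0,δ] with moments m₁, m₂; set μ := b m₁, σ² := b m₂/N, λ > 0, and λ_N := λ(1 − λσ²/(2μ)). Let f₃, f₂ : [0,∞) → ℝ be measurable and integrable with |f₃(x)| ≤ C e^{−λx} and |f₂(x)| ≤ D e^{−λx} for all x ≥ 0, for some C, D > 0. Define for t > 0 and x ≥ 0: w(t,x) := (f₃ * Ψ(t,·))(x) + exp(−2μx/σ²) [ (f₃ * Ψ(t,·))(−x) + (2μ/σ²)(f₂ * Ψ(t,·))(−x) ], where Ψ(t,y) := (1/(σ√(2πt))) exp(−(y + μt)²/(2σ²t)) and (f * h)(z) := ∫₀^∞ f(y) h(z − y) dy. Then for all t > 0 and x ≥ 0: |w(t,x)| ≤ C exp(−μ λ_N t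 − λx) + (C + D·(2μ/σ²)) exp(−μ λ_N t − (2μ/σ²)(λ_N/λ) x). -/
/-! Bounding `f` by `K e^{-λy}` and extending the integral from `(0, ∞)` to `ℝ`, each convolution
is at most `K` times the total mass of `y ↦ e^{-λy} Ψ(t, z - y)`. Exponential tilting turns this
into a Gaussian in `y` with mass `e^{-λ(z + μt) + λ²σ²t/2} = e^{-μλ_N t - λz}`. The case `z = x`
gives the first term; `z = -x`, multiplied by `e^{-2μx/σ²}`, gives the second. The identity for
`λ_N` needs `μ ≠ 0`, which holds since `μ = b m₁` and `g` is a probability density on `[0, δ]`. -/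

open MeasureTheory Real Set ProbabilityTheory
open scoped NNReal

lemma intervalIntegral_id_mul_pos {g : ℝ → ℝ} {δ : ℝ} (hδ : 0 ≤ δ)
    (hg_nonneg : ∀ v ∈ Icc 0 δ, 0 ≤ g v) (hg_int : IntervalIntegrable g volume 0 δ)
    (hg_pos : 0 < ∫ v in (0:ℝ)..δ, g v) :
    0 < ∫ v in (0:ℝ)..δ, v * g v := by
  have h_ae : ∀ f : ℝ → ℝ, (∀ v ∈ Ioc 0 δ, 0 ≤ f v) → 0 ≤ᵐ[volume.restrict (uIoc 0 δ)] f :=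
    fun f hf => by
      rw [uIoc_of_le hδ]
      exact (ae_restrict_iff' measurableSet_Ioc).mpr (ae_of_all _ hf)
  rw [intervalIntegral.integral_pos_iff_support_of_nonneg_ae'
    (h_ae _ fun v hv => hg_nonneg v (Ioc_subset_Icc_self hv)) hg_int] at hg_pos
  rw [intervalIntegral.integral_pos_iff_support_of_nonneg_ae'
    (h_ae _ fun v hv => mul_nonneg hv.1.le (hg_nonneg v (Ioc_subset_Icc_self hv)))
    (hg_int.continuousOn_mul continuousOn_id)]
  have h_supp : (Function.support fun v => v * g v) ∩ Ioc 0 δ = Function.support g ∩ Ioc 0 δ := by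
    ext v
    simp only [mem_inter_iff, Function.mem_support]
    constructor
    · rintro ⟨h, hv⟩; exact ⟨right_ne_zero_of_mul h, hv⟩
    · rintro ⟨h, hv⟩; exact ⟨mul_ne_zero hv.1.ne' h, hv⟩
  rwa [h_supp]

lemma exp_neg_mul_mul_gaussianPDFReal (lam m y : ℝ) {v : ℝ≥0} (hv : v ≠ 0) :
    exp (-lam * y) * gaussianPDFReal m v y =
      exp (-lam * m + lam ^ 2 * v / 2) * gaussianPDFReal (m - lam * v) v y := by
  have hv' : (v : ℝ) ≠ 0 := by exact_mod_cast hv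
  simp only [gaussianPDFReal]
  rw [mul_left_comm, mul_left_comm (exp _), ← exp_add, ← exp_add]
  congr 2
  field_simp
  ring

lemma heatKernel_eq_gaussianPDFReal {σ t : ℝ} (hσ : 0 < σ) (ht : 0 < t) (μ z y : ℝ) :
    1 / (σ * √(2 * π * t)) * exp (-((z - y) + μ * t) ^ 2 / (2 * σ ^ 2 * t)) =
      gaussianPDFReal (z + μ * t) (σ ^ 2 * t).toNNReal y := by
  have h_sqrt : √(2 * π * (σ ^ 2 * t)) = σ * √(2 * π * t) := by
    rw [show 2 * π * (σ ^ 2 * t) = σ ^ 2 * (2 * π * t) by ring,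
      sqrt_mul (sq_nonneg σ), sqrt_sq hσ.le]
  rw [gaussianPDFReal, Real.coe_toNNReal _ (by positivity), h_sqrt, one_div]
  congr 2
  ring

lemma abs_setIntegral_Ioi_mul_gaussianPDFReal_le {f : ℝ → ℝ} {K lam : ℝ}
    (hf : ∀ y, 0 ≤ y → |f y| ≤ K * exp (-lam * y)) (m : ℝ) {v : ℝ≥0} (hv : v ≠ 0) :
    |∫ y in Ioi 0, f y * gaussianPDFReal m v y| ≤ K * exp (-lam * m + lam ^ 2 * v / 2) := by
  have hK : 0 ≤ K := by simpa using (abs_nonneg _).trans (hf 0 le_rfl)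
  set G : ℝ → ℝ := fun y => K * exp (-lam * m + lam ^ 2 * v / 2) *
    gaussianPDFReal (m - lam * v) v y
  have hG_int : Integrable G := (integrable_gaussianPDFReal _ _).const_mul _
  have hG_nonneg : ∀ y, 0 ≤ G y := fun y => by
    have := gaussianPDFReal_nonneg (m - lam * v) v y
    positivity
  have h_dom : ∀ y ∈ Ioi (0:ℝ), ‖f y * gaussianPDFReal m v y‖ ≤ G y := fun y hy => by
    rw [show G y = K * (exp (-lam * m + lam ^ 2 * v / 2) * gaussianPDFReal (m - lam * v) v y)
      from mul_assoc _ _ _, ← exp_neg_mul_mul_gaussianPDFReal lam m y hv, ← mul_assoc, norm_mul,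
      Real.norm_of_nonneg (gaussianPDFReal_nonneg _ _ _)]
    exact mul_le_mul_of_nonneg_right (hf y (le_of_lt hy)) (gaussianPDFReal_nonneg _ _ _)
  calc |∫ y in Ioi 0, f y * gaussianPDFReal m v y|
      ≤ ∫ y in Ioi 0, G y :=
        norm_integral_le_of_norm_le hG_int.integrableOn
          ((ae_restrict_iff' measurableSet_Ioi).mpr (ae_of_all _ h_dom))
    _ ≤ ∫ y, G y := setIntegral_le_integral hG_int (ae_of_all _ hG_nonneg)
    _ = K * exp (-lam * m + lam ^ 2 * v / 2) := by
        rw [integral_const_mul, integral_gaussianPDFReal_eq_one _ hv, mul_one]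

lemma abs_setIntegral_Ioi_mul_heatKernel_le {f Ψ : ℝ → ℝ} {K lam σ μ t : ℝ}
    (hf : ∀ y, 0 ≤ y → |f y| ≤ K * exp (-lam * y)) (hσ : 0 < σ) (ht : 0 < t)
    (hΨ : ∀ y, Ψ y = 1 / (σ * √(2 * π * t)) * exp (-(y + μ * t) ^ 2 / (2 * σ ^ 2 * t)))
    (z : ℝ) :
    |∫ y in Ioi 0, f y * Ψ (z - y)| ≤ K * exp (-lam * (z + μ * t) + lam ^ 2 * (σ ^ 2 * t) / 2) := by
  simp only [hΨ, heatKernel_eq_gaussianPDFReal hσ ht]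
  have hv : 0 < σ ^ 2 * t := by positivity
  have h := abs_setIntegral_Ioi_mul_gaussianPDFReal_le hf (z + μ * t) (Real.toNNReal_pos.mpr hv).ne'
  rwa [Real.coe_toNNReal _ hv.le] at h

lemma abs_add_mul_add_mul_le (a b c : ℝ) {e k : ℝ} (he : 0 ≤ e) (hk : 0 ≤ k) :
    |a + e * (b + k * c)| ≤ |a| + e * (|b| + k * |c|) := by
  have h_outer := abs_add_le a (e * (b + k * c))
  have h_inner := abs_add_le b (k * c)
  rw [abs_mul, abs_of_nonneg he] at h_outer
  rw [abs_mul, abs_of_nonneg hk] at h_inner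
  linarith [mul_le_mul_of_nonneg_left h_inner he]

theorem bound_third_derivative_general
    (b δ : ℝ) (hb : 0 < b) (hδ : 0 < δ)
    (g : ℝ → ℝ) (hg_nonneg : ∀ v ∈ Set.Icc (0:ℝ) δ, 0 ≤ g v)
    (hg_int : IntervalIntegrable g MeasureTheory.volume 0 δ)
    (hg_prob : ∫ v in (0:ℝ)..δ, g v = 1)
    (m₁ : ℝ)
    (hm₁ : m₁ = ∫ v in (0:ℝ)..δ, v * g v)
    (μ σ : ℝ) (hμ : μ = b * m₁) (hσ : 0 < σ)
    (lam lamN : ℝ) (hlam : 0 < lam)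
    (hlamN : lamN = lam * (1 - lam * σ ^ 2 / (2 * μ)))
    (C D : ℝ)
    (f₃ f₂ : ℝ → ℝ)
    (hf₃_bound : ∀ x : ℝ, 0 ≤ x → |f₃ x| ≤ C * Real.exp (-lam * x))
    (hf₂_bound : ∀ x : ℝ, 0 ≤ x → |f₂ x| ≤ D * Real.exp (-lam * x))
    (Ψ : ℝ → ℝ → ℝ)
    (hΨ : ∀ t : ℝ, 0 < t → ∀ y : ℝ,
      Ψ t y = (1 / (σ * Real.sqrt (2 * Real.pi * t))) *
        Real.exp (-(y + μ * t) ^ 2 / (2 * σ ^ 2 * t)))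
    (w : ℝ → ℝ → ℝ)
    (hw : ∀ t : ℝ, 0 < t → ∀ x : ℝ, 0 ≤ x →
      w t x = (∫ y in Set.Ioi (0:ℝ), f₃ y * Ψ t (x - y)) +
        Real.exp (-2 * μ * x / σ ^ 2) *
          ((∫ y in Set.Ioi (0:ℝ), f₃ y * Ψ t (-x - y)) +
            (2 * μ / σ ^ 2) * ∫ y in Set.Ioi (0:ℝ), f₂ y * Ψ t (-x - y))) :
    ∀ t : ℝ, 0 < t → ∀ x : ℝ, 0 ≤ x →
      |w t x| ≤ C * Real.exp (-μ * lamN * t - lam * x) +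
        (C + D * (2 * μ / σ ^ 2)) *
          Real.exp (-μ * lamN * t - (2 * μ / σ ^ 2) * (lamN / lam) * x) := by
  intro t ht x hx
  have hμ_pos : 0 < μ := hμ ▸ hm₁ ▸
    mul_pos hb (intervalIntegral_id_mul_pos hδ.le hg_nonneg hg_int (hg_prob ▸ one_pos))
  have h_mass : ∀ z, -lam * (z + μ * t) + lam ^ 2 * (σ ^ 2 * t) / 2 = -μ * lamN * t - lam * z := by
    intro z
    rw [hlamN]
    field_simp
    ring
  have h_weight : -2 * μ * x / σ ^ 2 + (-μ * lamN * t - lam * -x) =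
      -μ * lamN * t - (2 * μ / σ ^ 2) * (lamN / lam) * x := by
    rw [hlamN]
    field_simp
    ring
  have hI₁ := abs_setIntegral_Ioi_mul_heatKernel_le hf₃_bound hσ ht (hΨ t ht) x
  have hI₂ := abs_setIntegral_Ioi_mul_heatKernel_le hf₃_bound hσ ht (hΨ t ht) (-x)
  have hI₃ := abs_setIntegral_Ioi_mul_heatKernel_le hf₂_bound hσ ht (hΨ t ht) (-x)
  rw [h_mass] at hI₁ hI₂ hI₃
  have hk : 0 ≤ 2 * μ / σ ^ 2 := by positivity
  rw [hw t ht x hx, ← h_weight, exp_add]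
  refine (abs_add_mul_add_mul_le _ _ _ (exp_pos _).le hk).trans ?_
  refine (add_le_add hI₁ (mul_le_mul_of_nonneg_left
    (add_le_add hI₂ (mul_le_mul_of_nonneg_left hI₃ hk)) (exp_pos _).le)).trans_eq ?_
  ring

theorem bound_third_derivative
    (b δ N : ℝ) (hb : 0 < b) (hδ : 0 < δ) (hN : 0 < N)
    (g : ℝ → ℝ) (hg_nonneg : ∀ v ∈ Set.Icc (0:ℝ) δ, 0 ≤ g v)
    (hg_int : IntervalIntegrable g MeasureTheory.volume 0 δ)
    (hg_prob : ∫ v in (0:ℝ)..δ, g v = 1)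
    (m₁ m₂ : ℝ)
    (hm₁ : m₁ = ∫ v in (0:ℝ)..δ, v * g v)
    (hm₂ : m₂ = ∫ v in (0:ℝ)..δ, v ^ 2 * g v)
    (μ σ : ℝ) (hμ : μ = b * m₁) (hσ2 : σ ^ 2 = b * m₂ / N) (hσ : 0 < σ)
    (lam lamN : ℝ) (hlam : 0 < lam)
    (hlamN : lamN = lam * (1 - lam * σ ^ 2 / (2 * μ)))
    (C D : ℝ) (hC : 0 < C) (hD : 0 < D)
    (f₃ f₂ : ℝ → ℝ) (hf₃_meas : Measurable f₃) (hf₂_meas : Measurable f₂)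
    (hf₃_int : MeasureTheory.IntegrableOn f₃ (Set.Ioi 0))
    (hf₂_int : MeasureTheory.IntegrableOn f₂ (Set.Ioi 0))
    (hf₃_bound : ∀ x : ℝ, 0 ≤ x → |f₃ x| ≤ C * Real.exp (-lam * x))
    (hf₂_bound : ∀ x : ℝ, 0 ≤ x → |f₂ x| ≤ D * Real.exp (-lam * x))
    (Ψ : ℝ → ℝ → ℝ)
    (hΨ : ∀ t : ℝ, 0 < t → ∀ y : ℝ,
      Ψ t y = (1 / (σ * Real.sqrt (2 * Real.pi * t))) *
        Real.exp (-(y + μ * t) ^ 2 / (2 * σ ^ 2 * t)))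
    (w : ℝ → ℝ → ℝ)
    (hw : ∀ t : ℝ, 0 < t → ∀ x : ℝ, 0 ≤ x →
      w t x = (∫ y in Set.Ioi (0:ℝ), f₃ y * Ψ t (x - y)) +
        Real.exp (-2 * μ * x / σ ^ 2) *
          ((∫ y in Set.Ioi (0:ℝ), f₃ y * Ψ t (-x - y)) +
            (2 * μ / σ ^ 2) * ∫ y in Set.Ioi (0:ℝ), f₂ y * Ψ t (-x - y))) :
    ∀ t : ℝ, 0 < t → ∀ x : ℝ, 0 ≤ x →
      |w t x| ≤ C * Real.exp (-μ * lamN * t - lam * x) +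
        (C + D * (2 * μ / σ ^ 2)) *
          Real.exp (-μ * lamN * t - (2 * μ / σ ^ 2) * (lamN / lam) * x) :=
  bound_third_derivative_general b δ hb hδ g hg_nonneg hg_int hg_prob m₁ hm₁ μ σ hμ hσ lam lamN hlam
    hlamN C D f₃ f₂ hf₃_bound hf₂_bound Ψ hΨ w hw
end
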